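/- arXiv:2007.12321 — 4 statements merged into one kernel-verified Lean document; each statement's English description precedes it below -/
import Mathlib

section
/- Let q be a positive integer with q not congruent to 2 modulo 4. Then the series defining f(1/q) converges, with sum 1/2 if q ≡ 0 (mod 4), with sum 1/2 − 1/q if q ≡ 1 (mod 4), and with sum 1/2 + 1/q if q ≡ 3 (mod 4). -/
/-!
For `θ = (2k+1)π/q` the secant is a finite alternating sum of cosines of odd multiples of `θ`:
telescoping `2 cos θ cos((2j+1)θ) = cos(2jθ) + cos((2j+2)θ)` gives
`sec θ = ∑_{j<m} (-1)^j cos((2j+1)θ)` when `q = 2m` with `m` even, and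
`sec θ = 2 ∑_{j<M} (-1)^j cos((2j+1)θ) - (-1)^M` when `q = 2M+1`.
Exchanging this finite sum with the series over `k`, each resulting series is the Fourier series of
a triangle wave, `(4/π²) ∑_k cos((2k+1)πx)/(2k+1)² = 1/2 - x` on `[0, 1]`, obtained from the
Fourier series of the second Bernoulli polynomial. What remains is the alternating sum of
`1/2 - (2j+1)/q`, which has a closed form.
-/

open Real

/-- The `n`-th term (indexed from `0`, representing the positive integer `n+1`)
of the series defining the secant zeta function `ψ(r) = (4/π²) ∑_{n≥1} sec(nπr)/n²`. -/
noncomputable def psiSeries (r : ℝ) : ℕ → ℝ :=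
  fun n => (4 / π ^ 2) * (1 / Real.cos (((n : ℝ) + 1) * π * r)) / ((n : ℝ) + 1) ^ 2

/-- The `k`-th term of the series defining `f(r) = (4/π²) ∑_{k≥0} sec((2k+1)πr)/(2k+1)²`. -/
noncomputable def fSeries (r : ℝ) : ℕ → ℝ :=
  fun k => (4 / π ^ 2) * (1 / Real.cos ((2 * (k : ℝ) + 1) * π * r)) / (2 * (k : ℝ) + 1) ^ 2

open Finset Set

theorem hasSum_one_div_nat_sq_mul_cos {x : ℝ} (hx : x ∈ Icc (0 : ℝ) 1) :
    HasSum (fun n : ℕ => 1 / (n : ℝ) ^ 2 * cos (2 * π * n * x))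
      (π ^ 2 * (x ^ 2 - x + 1 / 6)) := by
  have hB : (Polynomial.map (algebraMap ℚ ℝ) (Polynomial.bernoulli 2)).eval x =
      x ^ 2 - x + 1 / 6 := by
    simp [Polynomial.bernoulli, sum_range_succ, bernoulli_two, sub_eq_add_neg]
  have h := hasSum_one_div_nat_pow_mul_cos one_ne_zero hx
  rw [mul_one, hB] at h
  convert h using 1
  rw [Nat.factorial_two]
  push_cast
  ring

theorem hasSum_four_div_pi_sq_mul_cos_odd_div_sq {x : ℝ} (hx : x ∈ Icc (0 : ℝ) 1) :
    HasSum (fun k : ℕ => 4 / π ^ 2 * cos ((2 * k + 1) * π * x) / (2 * k + 1) ^ 2)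
      (1 / 2 - x) := by
  have h₁ := hasSum_one_div_nat_sq_mul_cos (x := x / 2)
    ⟨by linarith [hx.1], by linarith [hx.2]⟩
  have h₂ := hasSum_one_div_nat_sq_mul_cos (x := x / 2 + 1 / 2)
    ⟨by linarith [hx.1], by linarith [hx.2]⟩
  -- shifting by a half period multiplies the `n`-th term by `(-1) ^ n`, so even terms cancel
  have hodd : HasSum (fun n : ℕ => (1 - (-1) ^ n) / (n : ℝ) ^ 2 * cos (n * π * x))
      (π ^ 2 * (1 / 4 - x / 2)) := by
    rw [show π ^ 2 * (1 / 4 - x / 2) = π ^ 2 * ((x / 2) ^ 2 - x / 2 + 1 / 6) -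
      π ^ 2 * ((x / 2 + 1 / 2) ^ 2 - (x / 2 + 1 / 2) + 1 / 6) by ring]
    refine (h₁.sub h₂).congr_fun fun n => ?_
    rw [show 2 * π * n * (x / 2 + 1 / 2) = n * π * x + n * π by ring, cos_add_nat_mul_pi]
    ring_nf
  have hinj : Function.Injective (fun k : ℕ => 2 * k + 1) := fun a b h => by simpa using h
  rw [← hinj.hasSum_iff] at hodd
  · rw [show 1 / 2 - x = 2 / π ^ 2 * (π ^ 2 * (1 / 4 - x / 2)) by field_simp; ring]
    refine (hodd.mul_left (2 / π ^ 2)).congr_fun fun k => ?_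
    rw [Function.comp_apply, Odd.neg_one_pow ⟨k, rfl⟩]
    push_cast
    ring
  · rintro n hn
    rcases Nat.even_or_odd n with hn' | ⟨k, rfl⟩
    · simp [hn'.neg_one_pow]
    · exact absurd ⟨k, rfl⟩ hn

theorem hasSum_fSeries_zero : HasSum (fSeries 0) (1 / 2) := by
  have h := hasSum_four_div_pi_sq_mul_cos_odd_div_sq (x := 0) ⟨le_rfl, zero_le_one⟩
  rw [sub_zero] at h
  exact h.congr_fun fun k => by simp [fSeries]

noncomputable def alternatingOddCosSum (m : ℕ) (θ : ℝ) : ℝ :=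
  ∑ j ∈ range m, (-1) ^ j * cos ((2 * j + 1) * θ)

theorem two_mul_cos_mul_alternatingOddCosSum (m : ℕ) (θ : ℝ) :
    2 * cos θ * alternatingOddCosSum m θ = 1 - (-1) ^ m * cos (2 * m * θ) := by
  have htelescope : ∀ j : ℕ, 2 * cos θ * ((-1) ^ j * cos ((2 * j + 1) * θ)) =
      (-1) ^ j * cos (2 * j * θ) - (-1) ^ (j + 1) * cos (2 * (j + 1 : ℕ) * θ) := by
    intro j
    rw [show 2 * j * θ = (2 * j + 1) * θ - θ by ring,
      show 2 * (j + 1 : ℕ) * θ = (2 * j + 1) * θ + θ by push_cast; ring, cos_sub, cos_add]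
    ring
  rw [alternatingOddCosSum, mul_sum, sum_congr rfl fun j _ => htelescope j, sum_range_sub']
  simp

theorem one_div_cos_eq_alternatingOddCosSum {m : ℕ} {θ : ℝ}
    (h : cos (2 * m * θ) = -(-1) ^ m) :
    1 / cos θ = alternatingOddCosSum m θ := by
  have key := two_mul_cos_mul_alternatingOddCosSum m θ
  rw [h, mul_neg, ← pow_add, ← two_mul, pow_mul, neg_one_sq, one_pow] at key
  exact (eq_one_div_of_mul_eq_one_right (by linarith)).symm

theorem one_div_cos_eq_two_mul_alternatingOddCosSum_sub {m : ℕ} {θ : ℝ}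
    (h : cos (2 * m * θ) = -cos θ) :
    1 / cos θ = 2 * alternatingOddCosSum m θ - (-1) ^ m := by
  have key := two_mul_cos_mul_alternatingOddCosSum m θ
  rw [h] at key
  exact (eq_one_div_of_mul_eq_one_right (by linarith)).symm

theorem sum_range_neg_one_pow_mul_half_sub (m : ℕ) (r : ℝ) :
    ∑ j ∈ range m, (-1) ^ j * (1 / 2 - (2 * j + 1) * r) =
      (1 - (-1) ^ m) / 4 + (-1) ^ m * m * r := by
  induction m with
  | zero => simp
  | succ m ih =>
    rw [sum_range_succ, ih, pow_succ]
    push_cast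
    ring

theorem hasSum_alternatingOddCosSum_div_sq {m : ℕ} {r : ℝ} (hr : 0 ≤ r)
    (hm : (2 * m - 1) * r ≤ 1) :
    HasSum
      (fun k : ℕ => 4 / π ^ 2 * alternatingOddCosSum m ((2 * k + 1) * π * r) / (2 * k + 1) ^ 2)
      ((1 - (-1) ^ m) / 4 + (-1) ^ m * m * r) := by
  have hterm : ∀ j ∈ range m, HasSum (fun k : ℕ =>
      (-1) ^ j * (4 / π ^ 2 * cos ((2 * k + 1) * π * ((2 * j + 1) * r)) / (2 * k + 1) ^ 2))
      ((-1) ^ j * (1 / 2 - (2 * j + 1) * r)) := by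
    intro j hj
    have hj' : (j : ℝ) + 1 ≤ m := by exact_mod_cast mem_range.mp hj
    exact (hasSum_four_div_pi_sq_mul_cos_odd_div_sq ⟨by positivity, by nlinarith⟩).mul_left _
  rw [← sum_range_neg_one_pow_mul_half_sub]
  refine (hasSum_sum hterm).congr_fun fun k => ?_
  rw [alternatingOddCosSum, mul_sum, sum_div]
  refine sum_congr rfl fun j _ => ?_
  ring_nf

theorem hasSum_fSeries_one_div_two_mul {m : ℕ} (hm : Even m) (hm0 : 0 < m) :
    HasSum (fSeries (1 / (2 * m))) (1 / 2) := by
  have hm0' : (0 : ℝ) < m := by exact_mod_cast hm0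
  have hsec : ∀ k : ℕ, 1 / cos ((2 * k + 1) * π * (1 / (2 * m))) =
      alternatingOddCosSum m ((2 * k + 1) * π * (1 / (2 * m))) := fun k =>
    one_div_cos_eq_alternatingOddCosSum <| by
      rw [show 2 * m * ((2 * k + 1) * π * (1 / (2 * m))) = (2 * k + 1 : ℕ) * π by
        field_simp; push_cast; ring, cos_nat_mul_pi, hm.neg_one_pow, Odd.neg_one_pow ⟨k, rfl⟩]
  have h := hasSum_alternatingOddCosSum_div_sq (m := m) (r := 1 / (2 * m)) (by positivity)
    (by rw [mul_one_div, div_le_one (by positivity)]; linarith)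
  rw [hm.neg_one_pow,
    show (1 - 1 : ℝ) / 4 + 1 * m * (1 / (2 * m)) = 1 / 2 by field_simp; ring] at h
  exact h.congr_fun fun k => by rw [fSeries, hsec, mul_div_assoc]

theorem hasSum_fSeries_one_div_two_mul_add_one (M : ℕ) :
    HasSum (fSeries (1 / (2 * M + 1))) (1 / 2 - (-1) ^ M / (2 * M + 1)) := by
  have hsec : ∀ k : ℕ, 1 / cos ((2 * k + 1) * π * (1 / (2 * M + 1))) =
      2 * alternatingOddCosSum M ((2 * k + 1) * π * (1 / (2 * M + 1))) - (-1) ^ M := fun k =>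
    one_div_cos_eq_two_mul_alternatingOddCosSum_sub <| by
      rw [show 2 * M * ((2 * k + 1) * π * (1 / (2 * M + 1))) =
          (2 * k + 1 : ℕ) * π - (2 * k + 1) * π * (1 / (2 * M + 1)) by
        field_simp; push_cast; ring,
        cos_nat_mul_pi_sub, Odd.neg_one_pow ⟨k, rfl⟩, neg_one_mul]
  have h := hasSum_alternatingOddCosSum_div_sq (m := M) (r := 1 / (2 * M + 1)) (by positivity)
    (by rw [mul_one_div, div_le_one (by positivity)]; linarith)
  have h' := (h.mul_left 2).sub (hasSum_fSeries_zero.mul_left ((-1) ^ M))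
  rw [show 2 * ((1 - (-1) ^ M) / 4 + (-1) ^ M * M * (1 / (2 * M + 1))) - (-1) ^ M * (1 / 2) =
    (1 / 2 - (-1) ^ M / (2 * M + 1) : ℝ) by field_simp; ring] at h'
  refine h'.congr_fun fun k => ?_
  simp only [fSeries, hsec, mul_zero, cos_zero]
  ring

theorem f_one_div_q_general (q : ℕ) (hq : 0 < q) :
    (q % 4 = 0 → HasSum (fSeries (1 / (q : ℝ))) (1 / 2)) ∧
    (q % 4 = 1 → HasSum (fSeries (1 / (q : ℝ))) (1 / 2 - 1 / (q : ℝ))) ∧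
    (q % 4 = 3 → HasSum (fSeries (1 / (q : ℝ))) (1 / 2 + 1 / (q : ℝ))) := by
  refine ⟨fun hq0 => ?_, fun hq1 => ?_, fun hq3 => ?_⟩
  · obtain ⟨m, rfl⟩ : ∃ m, q = 2 * m := ⟨q / 2, by omega⟩
    exact_mod_cast hasSum_fSeries_one_div_two_mul ⟨m / 2, by omega⟩ (by omega)
  · obtain ⟨M, rfl⟩ : ∃ M, q = 2 * M + 1 := ⟨q / 2, by omega⟩
    have hsum := hasSum_fSeries_one_div_two_mul_add_one M
    rw [Even.neg_one_pow ⟨M / 2, by omega⟩] at hsum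
    exact_mod_cast hsum
  · obtain ⟨M, rfl⟩ : ∃ M, q = 2 * M + 1 := ⟨q / 2, by omega⟩
    have hsum := hasSum_fSeries_one_div_two_mul_add_one M
    rw [Odd.neg_one_pow ⟨M / 2, by omega⟩, neg_div, sub_neg_eq_add] at hsum
    exact_mod_cast hsum

theorem f_one_div_q (q : ℕ) (hq : 0 < q) (hq2 : q % 4 ≠ 2) :
    (q % 4 = 0 → HasSum (fSeries (1 / (q : ℝ))) (1 / 2)) ∧
    (q % 4 = 1 → HasSum (fSeries (1 / (q : ℝ))) (1 / 2 - 1 / (q : ℝ))) ∧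
    (q % 4 = 3 → HasSum (fSeries (1 / (q : ℝ))) (1 / 2 + 1 / (q : ℝ))) :=
  f_one_div_q_general q hq
end

section
/- The series defining f(1/3) converges with sum 5/6; that is, (4/π²) ∑_{k=0}^∞ sec((2k+1)π/3)/(2k+1)² = 5/6. -/
open Real

/-!
`cos ((2k + 1) π / 3)` is `-1` when `3 ∣ 2k + 1` (i.e. `k ≡ 1 mod 3`) and `1 / 2` otherwise, so
`f(1/3) = (4/π²) (2 ∑_{n odd} 1/n² - 3 ∑_{n odd, 3 ∣ n} 1/n²) = (4/π²) (2 · π²/8 - 3 · π²/72) = 5/6`,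
using `∑_{n odd} 1/n² = π²/8`, obtained from `ζ(2) = π²/6` by removing the even terms.
-/

theorem hasSum_one_div_odd_sq :
    HasSum (fun k : ℕ => 1 / (2 * (k : ℝ) + 1) ^ 2) (π ^ 2 / 8) := by
  have heven : HasSum (fun k : ℕ => 1 / ((2 * k : ℕ) : ℝ) ^ 2) (1 / 4 * (π ^ 2 / 6)) := by
    have hscale : (fun k : ℕ => 1 / ((2 * k : ℕ) : ℝ) ^ 2) =
        fun k : ℕ => 1 / 4 * (1 / (k : ℝ) ^ 2) := by
      ext k; push_cast; ring
    rw [hscale]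
    exact hasSum_zeta_two.mul_left _
  have hodd : Summable (fun k : ℕ => 1 / ((2 * k + 1 : ℕ) : ℝ) ^ 2) :=
    hasSum_zeta_two.summable.comp_injective (i := fun k => 2 * k + 1) fun a b h => by simpa using h
  have htotal := (HasSum.even_add_odd (f := fun n : ℕ => 1 / (n : ℝ) ^ 2) heven hodd.hasSum).unique
    hasSum_zeta_two
  have hodd_sum : HasSum (fun k : ℕ => 1 / ((2 * k + 1 : ℕ) : ℝ) ^ 2) (π ^ 2 / 8) := by
    rw [show π ^ 2 / 8 = ∑' k : ℕ, 1 / ((2 * k + 1 : ℕ) : ℝ) ^ 2 by linarith]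
    exact hodd.hasSum
  simpa using hodd_sum

theorem hasSum_ite_mod_eq_iff {α : Type*} [AddCommMonoid α] [TopologicalSpace α] {m r : ℕ}
    (hr : r < m) (f : ℕ → α) (a : α) :
    HasSum (fun n => if n % m = r then f n else 0) a ↔ HasSum (fun n => f (m * n + r)) a := by
  have hinj : Function.Injective (fun n => m * n + r) := fun a b h => by
    simp only [add_left_inj] at h
    exact Nat.eq_of_mul_eq_mul_left (by omega) h
  rw [← hinj.hasSum_iff]
  · simp only [Function.comp_def, Nat.mul_add_mod, Nat.mod_eq_of_lt hr, if_true]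
  · intro n hn
    refine if_neg fun h => hn ⟨n / m, ?_⟩
    show m * (n / m) + r = n
    rw [← h, Nat.div_add_mod]

theorem cos_odd_mul_pi_div_three (k : ℕ) :
    cos ((2 * (k : ℝ) + 1) * π * (1 / 3)) = if k % 3 = 1 then -1 else 1 / 2 := by
  obtain ⟨q, r, hr, rfl⟩ : ∃ q r, r < 3 ∧ k = r + 3 * q :=
    ⟨k / 3, k % 3, Nat.mod_lt _ (by norm_num), (Nat.mod_add_div k 3).symm⟩
  have hperiod : (2 * ((r + 3 * q : ℕ) : ℝ) + 1) * π * (1 / 3) =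
      (2 * (r : ℝ) + 1) * π / 3 + q * (2 * π) := by
    push_cast; ring
  rw [hperiod, cos_add_nat_mul_two_pi, Nat.add_mul_mod_self_left, Nat.mod_eq_of_lt hr]
  interval_cases r
  · norm_num [cos_pi_div_three]
  · norm_num
  · rw [show (2 * ((2 : ℕ) : ℝ) + 1) * π / 3 = (1 : ℕ) * (2 * π) - π / 3 by push_cast; ring,
      cos_nat_mul_two_pi_sub, cos_pi_div_three]
    norm_num

theorem fSeries_one_third_eq (k : ℕ) :
    fSeries (1 / 3) k = 8 / π ^ 2 * (1 / (2 * (k : ℝ) + 1) ^ 2)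
      - if k % 3 = 1 then 12 / π ^ 2 * (1 / (2 * (k : ℝ) + 1) ^ 2) else 0 := by
  rw [fSeries, cos_odd_mul_pi_div_three]
  split_ifs <;> ring

theorem f_one_third : HasSum (fSeries (1 / 3)) (5 / 6) := by
  have hodd : HasSum (fun k : ℕ => 8 / π ^ 2 * (1 / (2 * (k : ℝ) + 1) ^ 2)) 1 := by
    have h := hasSum_one_div_odd_sq.mul_left (8 / π ^ 2)
    rwa [show 8 / π ^ 2 * (π ^ 2 / 8) = (1 : ℝ) by field_simp] at h
  have hodd_mul_three : HasSum
      (fun k : ℕ => if k % 3 = 1 then 12 / π ^ 2 * (1 / (2 * (k : ℝ) + 1) ^ 2) else 0) (1 / 6) := by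
    rw [hasSum_ite_mod_eq_iff (by norm_num)]
    have hrescale : (fun m : ℕ => 12 / π ^ 2 * (1 / (2 * ((3 * m + 1 : ℕ) : ℝ) + 1) ^ 2)) =
        fun m : ℕ => 4 / (3 * π ^ 2) * (1 / (2 * (m : ℝ) + 1) ^ 2) := by
      ext m; push_cast; field_simp; ring
    rw [hrescale, show (1 / 6 : ℝ) = 4 / (3 * π ^ 2) * (π ^ 2 / 8) by field_simp; ring]
    exact hasSum_one_div_odd_sq.mul_left _
  rw [funext fSeries_one_third_eq, show (5 / 6 : ℝ) = 1 - 1 / 6 by norm_num]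
  exact hodd.sub hodd_mul_three
end

section
/- The series defining f(1/4) converges with sum 1/2; that is, (4/π²) ∑_{k=0}^∞ sec((2k+1)π/4)/(2k+1)² = 1/2. -/
open Real

/-!
At odd multiples `θ` of `π/4` we have `cos² θ = 1/2`, so `sec θ = 2 cos θ` and `f(1/4)`
becomes the cosine series `(8/π²) ∑_k cos((2k+1)π/4)/(2k+1)²`. Splitting the Fourier series
`∑_{n≥1} cos(2πnx)/n² = π² B₂(x)` into even and odd `n` gives
`∑_k cos(2π(2k+1)x)/(2k+1)² = π² (B₂(x) - B₂(2x)/4) = π² (1 - 4x)/8` for `0 ≤ x ≤ 1/2`,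
which is `π²/16` at `x = 1/8`.
-/

open Set

theorem hasSum_cos_div_sq {x : ℝ} (hx : x ∈ Icc 0 1) :
    HasSum (fun n : ℕ => cos (2 * π * n * x) / n ^ 2) (π ^ 2 * (x ^ 2 - x + 1 / 6)) := by
  convert hasSum_one_div_nat_pow_mul_cos one_ne_zero hx using 1
  · ext n
    ring
  · rw [← bernoulliFun, Nat.mul_one, bernoulliFun_two]
    push_cast [Nat.factorial]
    ring

theorem hasSum_cos_odd_div_sq {x : ℝ} (hx : x ∈ Icc 0 (1 / 2)) :
    HasSum (fun k : ℕ => cos (2 * π * (2 * k + 1) * x) / (2 * k + 1) ^ 2)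
      (π ^ 2 * (1 - 4 * x) / 8) := by
  have hall := hasSum_cos_div_sq ⟨hx.1, hx.2.trans (by norm_num)⟩
  have heven : HasSum (fun k : ℕ => cos (2 * π * (2 * k : ℕ) * x) / ((2 * k : ℕ) : ℝ) ^ 2)
      (π ^ 2 * ((2 * x) ^ 2 - 2 * x + 1 / 6) / 4) :=
    ((hasSum_cos_div_sq ⟨by linarith [hx.1], by linarith [hx.2]⟩).div_const 4).congr_fun
      fun k => by push_cast; ring_nf
  obtain ⟨s, hodd⟩ : Summable
      fun k : ℕ => cos (2 * π * (2 * k + 1 : ℕ) * x) / ((2 * k + 1 : ℕ) : ℝ) ^ 2 :=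
    hall.summable.comp_injective fun a b h => by simpa using h
  have htotal := (HasSum.even_add_odd (f := fun n : ℕ => cos (2 * π * n * x) / (n : ℝ) ^ 2)
    heven hodd).unique hall
  rw [show π ^ 2 * (1 - 4 * x) / 8 = s by linarith]
  exact hodd.congr_fun fun k => by push_cast; rfl

theorem cos_sq_odd_mul_pi_div_four (n : ℤ) : cos ((2 * n + 1) * π / 4) ^ 2 = 1 / 2 := by
  rw [cos_sq, show 2 * ((2 * n + 1) * π / 4) = n * π + π / 2 by ring, cos_add_pi_div_two,
    sin_int_mul_pi]
  norm_num

theorem one_div_cos_odd_mul_pi_div_four (n : ℤ) :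
    1 / cos ((2 * n + 1) * π / 4) = 2 * cos ((2 * n + 1) * π / 4) := by
  have hsq := cos_sq_odd_mul_pi_div_four n
  have hne : cos ((2 * n + 1) * π / 4) ≠ 0 := fun h => by simp [h] at hsq
  field_simp
  linarith

theorem f_one_fourth : HasSum (fSeries (1 / 4)) (1 / 2) := by
  have hterm : fSeries (1 / 4) = fun k : ℕ =>
      8 / π ^ 2 * (cos (2 * π * (2 * k + 1) * (1 / 8)) / (2 * k + 1) ^ 2) := by
    ext k
    have hsec := one_div_cos_odd_mul_pi_div_four k
    push_cast at hsec
    dsimp only [fSeries]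
    rw [show 2 * π * (2 * k + 1) * (1 / 8) = (2 * k + 1) * π / 4 by ring,
      show (2 * k + 1) * π * (1 / 4) = (2 * k + 1) * π / 4 by ring, hsec]
    ring
  rw [hterm, show (1 / 2 : ℝ) = 8 / π ^ 2 * (π ^ 2 * (1 - 4 * (1 / 8)) / 8) by
    field_simp; norm_num]
  exact (hasSum_cos_odd_div_sq ⟨by norm_num, by norm_num⟩).mul_left _
end

section
/- For every positive integer ℓ, the series defining f(ℓ/(1+4ℓ)) converges with sum 1/2 + ((−1)^ℓ − 1)/(2(1+4ℓ)); in particular the sum is 1/2 when ℓ is even and 1/2 − 1/(1+4ℓ) when ℓ is odd. -/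
/-!
Put `x = (2k+1)π / (2(4ℓ+1))`, so that `cos ((4ℓ+1) x) = 0`. Then `cos x + cos ((4ℓ+1) x) =
2 cos ((2ℓ+1) x) cos (2ℓ x)` together with the Dirichlet-kernel type identity
`cos x · (1 + 2 ∑_{j=1}^{ℓ} (-1)^j cos (2jx)) = (-1)^ℓ cos ((2ℓ+1) x)` expresses `sec (2ℓ x)` as the
trigonometric polynomial `2 (-1)^ℓ (1 + 2 ∑_{j=1}^{ℓ} (-1)^j cos (2jx))` whenever `cos x ≠ 0`, i.e.
whenever `4ℓ+1 ∤ 2k+1`. Hence `f(ℓ/(4ℓ+1))` is a finite combination of the triangle-wave series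
`(4/π²) ∑ cos ((2k+1)πy)/(2k+1)² = (1 - 2y)/2` (`0 ≤ y ≤ 1`, the odd part of the Fourier series of
the Bernoulli polynomial `B₂`) at `y = j/(4ℓ+1)`, plus an explicit correction supported on the
indices with `4ℓ+1 ∣ 2k+1`.
-/

open Real

open Finset

theorem hasSum_one_div_sq_mul_cos {x : ℝ} (hx : x ∈ Set.Icc (0 : ℝ) 1) :
    HasSum (fun n : ℕ => 1 / (n : ℝ) ^ 2 * cos (2 * π * n * x)) (π ^ 2 * (x ^ 2 - x + 6⁻¹)) := by
  have h := hasSum_one_div_nat_pow_mul_cos (k := 1) one_ne_zero hx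
  simp only [Nat.reduceMul] at h
  convert h using 1
  rw [← bernoulliFun, bernoulliFun_two, Nat.factorial_two]
  push_cast
  ring

theorem hasSum_cos_odd_mul_div_sq {y : ℝ} (hy : y ∈ Set.Icc (0 : ℝ) 1) :
    HasSum (fun k : ℕ => 4 / π ^ 2 * cos ((2 * k + 1) * π * y) / (2 * k + 1) ^ 2)
      ((1 - 2 * y) / 2) := by
  have hy2 : y / 2 ∈ Set.Icc (0 : ℝ) 1 := ⟨by linarith [hy.1], by linarith [hy.2]⟩
  set f : ℕ → ℝ := fun n => 1 / (n : ℝ) ^ 2 * cos (2 * π * n * (y / 2))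
  have hf : HasSum f _ := hasSum_one_div_sq_mul_cos hy2
  -- the even terms of the series at `y / 2` form the series at `y`, scaled by `1 / 4`
  have hEven : HasSum (fun m => f (2 * m)) (π ^ 2 * (y ^ 2 - y + 6⁻¹) / 4) := by
    refine ((hasSum_one_div_sq_mul_cos hy).div_const 4).congr_fun fun m => ?_
    simp only [f]
    push_cast
    rw [show 2 * π * (2 * (m : ℝ)) * (y / 2) = 2 * π * m * y by ring]
    ring
  obtain ⟨S, hOdd⟩ : Summable fun m => f (2 * m + 1) :=
    hf.summable.comp_injective ((add_left_injective 1).comp (mul_right_injective₀ two_ne_zero))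
  have hS := hf.unique (hEven.even_add_odd hOdd)
  have hval : (1 - 2 * y) / 2 = 4 / π ^ 2 * S := by
    rw [eq_sub_of_add_eq' hS.symm]
    field_simp
    ring
  rw [hval]
  refine (hOdd.mul_left (4 / π ^ 2)).congr_fun fun k => ?_
  simp only [f]
  push_cast
  rw [show 2 * π * (2 * (k : ℝ) + 1) * (y / 2) = (2 * k + 1) * π * y by ring]
  ring

theorem hasSum_four_div_pi_sq_div_odd_sq :
    HasSum (fun k : ℕ => 4 / π ^ 2 / (2 * k + 1) ^ 2) (1 / 2) := by
  simpa using hasSum_cos_odd_mul_div_sq (y := 0) (by simp)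

theorem hasSum_ite_dvd_odd {M : ℕ} (hM : Odd M) :
    HasSum (fun k : ℕ => if M ∣ 2 * k + 1 then 4 / π ^ 2 / (2 * (k : ℝ) + 1) ^ 2 else 0)
      (1 / (2 * (M : ℝ) ^ 2)) := by
  obtain ⟨m, rfl⟩ := hM
  -- `2m+1 ∣ 2k+1` iff `k = m + (2m+1) q`, and then `2k+1 = (2m+1)(2q+1)`
  have hinj : Function.Injective fun q : ℕ => m + (2 * m + 1) * q :=
    (add_right_injective m).comp (mul_right_injective₀ (by omega))
  rw [← hinj.hasSum_iff]
  · rw [show (1 : ℝ) / (2 * ((2 * m + 1 : ℕ) : ℝ) ^ 2) = 1 / 2 / ((2 * m + 1 : ℕ) : ℝ) ^ 2 by ring]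
    refine (hasSum_four_div_pi_sq_div_odd_sq.div_const _).congr_fun fun q => ?_
    rw [Function.comp_apply, if_pos ⟨2 * q + 1, by ring⟩]
    push_cast
    field_simp
    ring
  · intro k hk
    rw [if_neg]
    rintro ⟨j, hj⟩
    have : Odd ((2 * m + 1) * j) := hj ▸ odd_two_mul_add_one k
    obtain ⟨q, rfl⟩ := (Nat.odd_mul.mp this).2
    exact hk ⟨q, by linarith⟩

theorem sum_range_neg_one_pow_mul_add_mul (n : ℕ) (a b : ℝ) :
    ∑ t ∈ range n, (-1 : ℝ) ^ (t + 1) * (a + b * (t + 1)) =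
      a * ((-1) ^ n - 1) / 2 + b * ((-1) ^ n * (2 * n + 1) - 1) / 4 := by
  induction n with
  | zero => simp
  | succ n ih =>
    rw [sum_range_succ, ih]
    push_cast
    ring

theorem cos_mul_one_add_two_mul_sum_neg_one_pow_mul_cos (m : ℕ) (x : ℝ) :
    cos x * (1 + 2 * ∑ t ∈ range m, (-1 : ℝ) ^ (t + 1) * cos (2 * ((t : ℝ) + 1) * x)) =
      (-1) ^ m * cos ((2 * m + 1) * x) := by
  induction m with
  | zero => simp
  | succ m ih =>
    have h := cos_add_cos ((2 * ((m : ℝ) + 1) + 1) * x) ((2 * m + 1) * x)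
    rw [show ((2 * ((m : ℝ) + 1) + 1) * x + (2 * m + 1) * x) / 2 = 2 * (m + 1) * x by ring,
      show ((2 * ((m : ℝ) + 1) + 1) * x - (2 * m + 1) * x) / 2 = x by ring] at h
    rw [sum_range_succ]
    push_cast
    linear_combination ih + (-1 : ℝ) ^ m * h

theorem one_div_cos_two_mul_eq_of_cos_eq_zero {ℓ : ℕ} {x : ℝ}
    (hN : cos ((4 * ℓ + 1) * x) = 0) (hx : cos x ≠ 0) :
    1 / cos (2 * ℓ * x) =
      2 * (-1) ^ ℓ * (1 + 2 * ∑ t ∈ range ℓ, (-1 : ℝ) ^ (t + 1) * cos (2 * ((t : ℝ) + 1) * x)) := by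
  set D := 1 + 2 * ∑ t ∈ range ℓ, (-1 : ℝ) ^ (t + 1) * cos (2 * ((t : ℝ) + 1) * x)
  have hD : cos x * D = (-1) ^ ℓ * cos ((2 * ℓ + 1) * x) :=
    cos_mul_one_add_two_mul_sum_neg_one_pow_mul_cos ℓ x
  have hprod := cos_add_cos ((4 * ℓ + 1) * x) x
  rw [show ((4 * (ℓ : ℝ) + 1) * x + x) / 2 = (2 * ℓ + 1) * x by ring,
    show ((4 * (ℓ : ℝ) + 1) * x - x) / 2 = 2 * ℓ * x by ring] at hprod
  have hs : (-1 : ℝ) ^ ℓ * (-1) ^ ℓ = 1 := by rw [← mul_pow]; norm_num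
  refine (eq_one_div_of_mul_eq_one_left (mul_left_cancel₀ hx ?_)).symm
  linear_combination 2 * (-1) ^ ℓ * cos (2 * ℓ * x) * hD +
    2 * cos ((2 * ℓ + 1) * x) * cos (2 * ℓ * x) * hs - hprod + hN

theorem cos_odd_mul_pi_mul_div_of_dvd {ℓ k q : ℕ} (hk : 2 * k + 1 = (4 * ℓ + 1) * (2 * q + 1))
    (c : ℕ) : cos ((2 * k + 1) * π * (c / (1 + 4 * ℓ))) = (-1) ^ c := by
  have hkR : (2 * k + 1 : ℝ) = (1 + 4 * ℓ) * (2 * q + 1) := by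
    rw [add_comm 1 (4 * (ℓ : ℝ))]
    exact_mod_cast hk
  rw [hkR, show (1 + 4 * ℓ) * (2 * q + 1) * π * (c / (1 + 4 * ℓ)) = ((2 * q + 1) * c : ℕ) * π by
    push_cast
    field_simp]
  rw [cos_nat_mul_pi, pow_mul, (odd_two_mul_add_one q).neg_one_pow]

theorem one_div_cos_odd_mul_pi_mul_div (ℓ k : ℕ) :
    1 / cos ((2 * k + 1) * π * (ℓ / (1 + 4 * ℓ))) =
      2 * (-1) ^ ℓ * (1 + 2 * ∑ t ∈ range ℓ,
        (-1 : ℝ) ^ (t + 1) * cos ((2 * k + 1) * π * ((t + 1) / (1 + 4 * ℓ)))) +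
      if 4 * ℓ + 1 ∣ 2 * k + 1 then (-1 : ℝ) ^ (ℓ + 1) * (1 + 4 * ℓ) else 0 := by
  split_ifs with hdvd
  · obtain ⟨j, hj⟩ := hdvd
    obtain ⟨q, rfl⟩ : Odd j := (Nat.odd_mul.mp (hj ▸ odd_two_mul_add_one k)).2
    have hcos := cos_odd_mul_pi_mul_div_of_dvd hj
    have hsum : ∑ t ∈ range ℓ, (-1 : ℝ) ^ (t + 1) *
        cos ((2 * k + 1) * π * ((t + 1) / (1 + 4 * ℓ))) = ∑ t ∈ range ℓ, (1 : ℝ) := by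
      refine sum_congr rfl fun t _ => ?_
      rw [show ((t : ℝ) + 1) = (t + 1 : ℕ) by push_cast; rfl, hcos, ← mul_pow]
      norm_num
    rw [hcos, hsum, sum_const, card_range, nsmul_one]
    obtain h | h := neg_one_pow_eq_or ℝ ℓ <;> rw [pow_succ, h] <;> ring
  · obtain ⟨x, hx⟩ : ∃ x : ℝ, (2 * k + 1) * π = x * (2 * (1 + 4 * ℓ)) :=
      ⟨_, (div_mul_cancel₀ _ (by positivity)).symm⟩
    rw [hx, show x * (2 * (1 + 4 * ℓ)) * (ℓ / (1 + 4 * ℓ)) = 2 * ℓ * x by field_simp]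
    simp_rw [show ∀ t : ℕ, x * (2 * (1 + 4 * ℓ)) * ((t + 1) / (1 + 4 * ℓ)) =
      2 * ((t : ℝ) + 1) * x by intro t; field_simp]
    rw [add_zero]
    refine one_div_cos_two_mul_eq_of_cos_eq_zero (cos_eq_zero_iff.mpr ⟨k, ?_⟩) fun hcos => hdvd ?_
    · push_cast
      linear_combination -hx / 2
    · obtain ⟨j, hj⟩ := cos_eq_zero_iff.mp hcos
      have hjR : (2 * k + 1 : ℝ) = (4 * ℓ + 1) * (2 * j + 1) := by
        apply mul_right_cancel₀ pi_ne_zero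
        linear_combination hx + 2 * (1 + 4 * ℓ) * hj
      have hjZ : (2 * k + 1 : ℤ) = (4 * ℓ + 1) * (2 * j + 1) := by exact_mod_cast hjR
      exact Int.natCast_dvd_natCast.mp ⟨2 * j + 1, by push_cast; exact hjZ⟩

theorem fSeries_div_one_add_four_mul_eq (ℓ k : ℕ) :
    fSeries (ℓ / (1 + 4 * ℓ)) k =
      2 * (-1) ^ ℓ * (4 / π ^ 2 / (2 * k + 1) ^ 2 + 2 * ∑ t ∈ range ℓ, (-1 : ℝ) ^ (t + 1) *
        (4 / π ^ 2 * cos ((2 * k + 1) * π * ((t + 1) / (1 + 4 * ℓ))) / (2 * k + 1) ^ 2)) +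
      (-1) ^ (ℓ + 1) * (1 + 4 * ℓ) *
        if 4 * ℓ + 1 ∣ 2 * k + 1 then 4 / π ^ 2 / (2 * (k : ℝ) + 1) ^ 2 else 0 := by
  have hfactor : ∑ t ∈ range ℓ, (-1 : ℝ) ^ (t + 1) *
      (4 / π ^ 2 * cos ((2 * k + 1) * π * ((t + 1) / (1 + 4 * ℓ))) / (2 * k + 1) ^ 2) =
      4 / π ^ 2 / (2 * k + 1) ^ 2 *
        ∑ t ∈ range ℓ, (-1 : ℝ) ^ (t + 1) * cos ((2 * k + 1) * π * ((t + 1) / (1 + 4 * ℓ))) := by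
    rw [mul_sum]
    exact sum_congr rfl fun _ _ => by ring
  rw [fSeries, one_div_cos_odd_mul_pi_mul_div, hfactor]
  split_ifs <;> ring

theorem hasSum_fSeries_div_one_add_four_mul (ℓ : ℕ) :
    HasSum (fSeries (ℓ / (1 + 4 * ℓ))) (1 / 2 + ((-1) ^ ℓ - 1) / (2 * (1 + 4 * ℓ))) := by
  set N : ℝ := 1 + 4 * ℓ with hN
  have hterm : ∀ t ∈ range ℓ, HasSum
      (fun k : ℕ => (-1 : ℝ) ^ (t + 1) * (4 / π ^ 2 * cos ((2 * k + 1) * π * ((t + 1) / N)) /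
        (2 * k + 1) ^ 2))
      ((-1 : ℝ) ^ (t + 1) * (1 / 2 + -N⁻¹ * (t + 1))) := fun t ht => by
    have hy : ((t : ℝ) + 1) / N ∈ Set.Icc (0 : ℝ) 1 := by
      have : (t : ℝ) + 1 ≤ ℓ := by exact_mod_cast mem_range.mp ht
      exact ⟨by positivity, (div_le_one (by positivity)).mpr (by linarith)⟩
    have h := (hasSum_cos_odd_mul_div_sq hy).mul_left ((-1 : ℝ) ^ (t + 1))
    rwa [show (1 - 2 * (((t : ℝ) + 1) / N)) / 2 = 1 / 2 + -N⁻¹ * (t + 1) by ring] at h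
  have hsum := ((hasSum_four_div_pi_sq_div_odd_sq.add ((hasSum_sum hterm).mul_left 2)).mul_left
    (2 * (-1) ^ ℓ)).add
      ((hasSum_ite_dvd_odd (M := 4 * ℓ + 1) ⟨2 * ℓ, by ring⟩).mul_left ((-1) ^ (ℓ + 1) * N))
  have hval : 1 / 2 + ((-1) ^ ℓ - 1) / (2 * N) =
      2 * (-1) ^ ℓ * (1 / 2 + 2 * ∑ t ∈ range ℓ, (-1) ^ (t + 1) * (1 / 2 + -N⁻¹ * (t + 1))) +
        (-1) ^ (ℓ + 1) * N * (1 / (2 * ((4 * ℓ + 1 : ℕ) : ℝ) ^ 2)) := by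
    rw [sum_range_neg_one_pow_mul_add_mul, hN]
    push_cast
    obtain h | h := neg_one_pow_eq_or ℝ ℓ <;> rw [pow_succ, h] <;> field_simp <;> ring
  rw [hval]
  exact hsum.congr_fun (fSeries_div_one_add_four_mul_eq ℓ)

theorem f_ell_div_one_add_four_ell_general (ℓ : ℕ) :
    HasSum (fSeries ((ℓ : ℝ) / (1 + 4 * (ℓ : ℝ))))
      (1 / 2 + ((-1 : ℝ) ^ ℓ - 1) / (2 * (1 + 4 * (ℓ : ℝ)))) ∧
    (Even ℓ → HasSum (fSeries ((ℓ : ℝ) / (1 + 4 * (ℓ : ℝ)))) (1 / 2)) ∧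
    (Odd ℓ → HasSum (fSeries ((ℓ : ℝ) / (1 + 4 * (ℓ : ℝ))))
        (1 / 2 - 1 / (1 + 4 * (ℓ : ℝ)))) := by
  have h := hasSum_fSeries_div_one_add_four_mul ℓ
  refine ⟨h, fun hℓ => ?_, fun hℓ => ?_⟩ <;> convert h using 2 <;> rw [hℓ.neg_one_pow]
  · ring
  · field_simp
    ring

theorem f_ell_div_one_add_four_ell (ℓ : ℕ) (hℓ : 0 < ℓ) :
    HasSum (fSeries ((ℓ : ℝ) / (1 + 4 * (ℓ : ℝ))))
      (1 / 2 + ((-1 : ℝ) ^ ℓ - 1) / (2 * (1 + 4 * (ℓ : ℝ)))) ∧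
    (Even ℓ → HasSum (fSeries ((ℓ : ℝ) / (1 + 4 * (ℓ : ℝ)))) (1 / 2)) ∧
    (Odd ℓ → HasSum (fSeries ((ℓ : ℝ) / (1 + 4 * (ℓ : ℝ))))
        (1 / 2 - 1 / (1 + 4 * (ℓ : ℝ)))) :=
  f_ell_div_one_add_four_ell_general ℓ
end
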